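/- The real zero set in ℝ⁹ of the gradient of V(x) = Σᵢ (1/40 xᵢ⁴ - xᵢ² + 1/4 Σ_{j ∈ N(i)} (xᵢ - xⱼ)²) consists of exactly the three points 0, (w,…,w), and (-w,…,-w) where w = √20, where N(i) are the four nearest neighbors of node i in the 3×3 periodic grid. -/
import Mathlib


/-- The four nearest neighbors of a node on the 3×3 periodic grid. -/
def nbrs (i : ZMod 3 × ZMod 3) : Multiset (ZMod 3 × ZMod 3) :=
  {(i.1 + 1, i.2), (i.1 - 1, i.2), (i.1, i.2 + 1), (i.1, i.2 - 1)}

/-- The gradient component fᵢ = (1/10)xᵢ³ - 2xᵢ + Σ_{j ∈ N(i)} (xᵢ - xⱼ) of the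
potential V(x) = Σᵢ ((1/40)xᵢ⁴ - xᵢ² + (1/4)Σ_{j∈N(i)} (xᵢ - xⱼ)²). -/
noncomputable def gradV (x : ZMod 3 × ZMod 3 → ℝ) (i : ZMod 3 × ZMod 3) : ℝ :=
  (1 / 10) * (x i) ^ 3 - 2 * x i + ((nbrs i).map (fun j => x i - x j)).sum

/-- `(s - t) * (s³ - t³) ≥ 0` since `t ↦ t³` is monotone. -/
lemma cube_mono (s t : ℝ) : 0 ≤ (s - t) * (s ^ 3 - t ^ 3) := by
  nlinarith [sq_nonneg (s - t), sq_nonneg (s + t), sq_nonneg s, sq_nonneg t]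


/-- If a sum of nine squares is nonpositive, every summand vanishes. -/
lemma sum9_sq_eq_zero {v1 v2 v3 v4 v5 v6 v7 v8 v9 : ℝ}
    (h : v1 ^ 2 + v2 ^ 2 + v3 ^ 2 + v4 ^ 2 + v5 ^ 2 + v6 ^ 2 + v7 ^ 2 + v8 ^ 2 + v9 ^ 2 ≤ 0) :
    v1 = 0 ∧ v2 = 0 ∧ v3 = 0 ∧ v4 = 0 ∧ v5 = 0 ∧ v6 = 0 ∧ v7 = 0 ∧ v8 = 0 ∧ v9 = 0 := by
  have n1 := sq_nonneg v1; have n2 := sq_nonneg v2; have n3 := sq_nonneg v3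
  have n4 := sq_nonneg v4; have n5 := sq_nonneg v5; have n6 := sq_nonneg v6
  have n7 := sq_nonneg v7; have n8 := sq_nonneg v8; have n9 := sq_nonneg v9
  refine ⟨?_, ?_, ?_, ?_, ?_, ?_, ?_, ?_, ?_⟩ <;>
    · rw [← sq_eq_zero_iff]
      linarith

set_option maxHeartbeats 1000000 in
/-- The real critical points of the φ⁴ energy landscape on the 3×3 periodic grid
are exactly 0, (w,…,w), and (-w,…,-w), where w = √20. -/
theorem phi4_critical_points :
    {x : ZMod 3 × ZMod 3 → ℝ | ∀ i, gradV x i = 0}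
      = {0, fun _ => Real.sqrt 20, fun _ => -Real.sqrt 20} := by
  ext x
  simp only [Set.mem_setOf_eq, Set.mem_insert_iff, Set.mem_singleton_iff]
  constructor
  · intro h
    have e00 := h (0, 0)
    have e01 := h (0, 1)
    have e02 := h (0, 2)
    have e10 := h (1, 0)
    have e11 := h (1, 1)
    have e12 := h (1, 2)
    have e20 := h (2, 0)
    have e21 := h (2, 1)
    have e22 := h (2, 2)
    simp only [gradV, nbrs, Multiset.insert_eq_cons, Multiset.map_cons, Multiset.map_singleton,
      Multiset.sum_cons, Multiset.sum_singleton,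
      show (0:ZMod 3)+1 = 1 by decide, show (0:ZMod 3)-1 = 2 by decide,
      show (1:ZMod 3)+1 = 2 by decide, show (1:ZMod 3)-1 = 0 by decide,
      show (2:ZMod 3)+1 = 0 by decide, show (2:ZMod 3)-1 = 1 by decide] at e00 e01 e02 e10 e11 e12 e20 e21 e22
    obtain ⟨a00, hx00⟩ : ∃ y, x (0, 0) = y := ⟨_, rfl⟩
    obtain ⟨a01, hx01⟩ : ∃ y, x (0, 1) = y := ⟨_, rfl⟩
    obtain ⟨a02, hx02⟩ : ∃ y, x (0, 2) = y := ⟨_, rfl⟩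
    obtain ⟨a10, hx10⟩ : ∃ y, x (1, 0) = y := ⟨_, rfl⟩
    obtain ⟨a11, hx11⟩ : ∃ y, x (1, 1) = y := ⟨_, rfl⟩
    obtain ⟨a12, hx12⟩ : ∃ y, x (1, 2) = y := ⟨_, rfl⟩
    obtain ⟨a20, hx20⟩ : ∃ y, x (2, 0) = y := ⟨_, rfl⟩
    obtain ⟨a21, hx21⟩ : ∃ y, x (2, 1) = y := ⟨_, rfl⟩
    obtain ⟨a22, hx22⟩ : ∃ y, x (2, 2) = y := ⟨_, rfl⟩
    simp only [hx00, hx01, hx02, hx10, hx11, hx12, hx20, hx21, hx22] at e00 e01 e02 e10 e11 e12 e20 e21 e22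
    obtain ⟨m, hm⟩ : ∃ m : ℝ, 9 * m = a00 + a01 + a02 + a10 + a11 + a12 + a20 + a21 + a22 := ⟨(a00 + a01 + a02 + a10 + a11 + a12 + a20 + a21 + a22) / 9, by ring⟩
    have hs0 : (a00 - m) + (a01 - m) + (a02 - m) + (a10 - m) + (a11 - m) + (a12 - m) + (a20 - m) + (a21 - m) + (a22 - m) = 0 := by linear_combination -hm
    have c00 : 0 ≤ (a00 - m) * (a00 ^ 3 - m ^ 3) := cube_mono _ _
    have c01 : 0 ≤ (a01 - m) * (a01 ^ 3 - m ^ 3) := cube_mono _ _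
    have c02 : 0 ≤ (a02 - m) * (a02 ^ 3 - m ^ 3) := cube_mono _ _
    have c10 : 0 ≤ (a10 - m) * (a10 ^ 3 - m ^ 3) := cube_mono _ _
    have c11 : 0 ≤ (a11 - m) * (a11 ^ 3 - m ^ 3) := cube_mono _ _
    have c12 : 0 ≤ (a12 - m) * (a12 ^ 3 - m ^ 3) := cube_mono _ _
    have c20 : 0 ≤ (a20 - m) * (a20 ^ 3 - m ^ 3) := cube_mono _ _
    have c21 : 0 ≤ (a21 - m) * (a21 ^ 3 - m ^ 3) := cube_mono _ _
    have c22 : 0 ≤ (a22 - m) * (a22 ^ 3 - m ^ 3) := cube_mono _ _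
    have q00 : 0 ≤ ((4 * a00 - 2 * a01 - 2 * a02 - 2 * a10 + 1 * a11 + 1 * a12 - 2 * a20 + 1 * a21 + 1 * a22) / 9) ^ 2 := sq_nonneg _
    have q01 : 0 ≤ ((- 2 * a00 + 4 * a01 - 2 * a02 + 1 * a10 - 2 * a11 + 1 * a12 + 1 * a20 - 2 * a21 + 1 * a22) / 9) ^ 2 := sq_nonneg _
    have q02 : 0 ≤ ((- 2 * a00 - 2 * a01 + 4 * a02 + 1 * a10 + 1 * a11 - 2 * a12 + 1 * a20 + 1 * a21 - 2 * a22) / 9) ^ 2 := sq_nonneg _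
    have q10 : 0 ≤ ((- 2 * a00 + 1 * a01 + 1 * a02 + 4 * a10 - 2 * a11 - 2 * a12 - 2 * a20 + 1 * a21 + 1 * a22) / 9) ^ 2 := sq_nonneg _
    have q11 : 0 ≤ ((1 * a00 - 2 * a01 + 1 * a02 - 2 * a10 + 4 * a11 - 2 * a12 + 1 * a20 - 2 * a21 + 1 * a22) / 9) ^ 2 := sq_nonneg _
    have q12 : 0 ≤ ((1 * a00 + 1 * a01 - 2 * a02 - 2 * a10 - 2 * a11 + 4 * a12 + 1 * a20 + 1 * a21 - 2 * a22) / 9) ^ 2 := sq_nonneg _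
    have q20 : 0 ≤ ((- 2 * a00 + 1 * a01 + 1 * a02 - 2 * a10 + 1 * a11 + 1 * a12 + 4 * a20 - 2 * a21 - 2 * a22) / 9) ^ 2 := sq_nonneg _
    have q21 : 0 ≤ ((1 * a00 - 2 * a01 + 1 * a02 + 1 * a10 - 2 * a11 + 1 * a12 - 2 * a20 + 4 * a21 - 2 * a22) / 9) ^ 2 := sq_nonneg _
    have q22 : 0 ≤ ((1 * a00 + 1 * a01 - 2 * a02 + 1 * a10 + 1 * a11 - 2 * a12 - 2 * a20 - 2 * a21 + 4 * a22) / 9) ^ 2 := sq_nonneg _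
    have hsum : (a00 - m) ^ 2 + (a01 - m) ^ 2 + (a02 - m) ^ 2 + (a10 - m) ^ 2 + (a11 - m) ^ 2 + (a12 - m) ^ 2 + (a20 - m) ^ 2 + (a21 - m) ^ 2 + (a22 - m) ^ 2 =
        -((1/10) * ((a00 - m) * (a00 ^ 3 - m ^ 3) + (a01 - m) * (a01 ^ 3 - m ^ 3) + (a02 - m) * (a02 ^ 3 - m ^ 3) + (a10 - m) * (a10 ^ 3 - m ^ 3) + (a11 - m) * (a11 ^ 3 - m ^ 3) + (a12 - m) * (a12 ^ 3 - m ^ 3) + (a20 - m) * (a20 ^ 3 - m ^ 3) + (a21 - m) * (a21 ^ 3 - m ^ 3) + (a22 - m) * (a22 ^ 3 - m ^ 3)) + 3 * (((4 * a00 - 2 * a01 - 2 * a02 - 2 * a10 + 1 * a11 + 1 * a12 - 2 * a20 + 1 * a21 + 1 * a22) / 9) ^ 2 + ((- 2 * a00 + 4 * a01 - 2 * a02 + 1 * a10 - 2 * a11 + 1 * a12 + 1 * a20 - 2 * a21 + 1 * a22) / 9) ^ 2 + ((- 2 * a00 - 2 * a01 + 4 * a02 + 1 * a10 + 1 * a11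 - 2 * a12 + 1 * a20 + 1 * a21 - 2 * a22) / 9) ^ 2 + ((- 2 * a00 + 1 * a01 + 1 * a02 + 4 * a10 - 2 * a11 - 2 * a12 - 2 * a20 + 1 * a21 + 1 * a22) / 9) ^ 2 + ((1 * a00 - 2 * a01 + 1 * a02 - 2 * a10 + 4 * a11 - 2 * a12 + 1 * a20 - 2 * a21 + 1 * a22) / 9) ^ 2 + ((1 * a00 + 1 * a01 - 2 * a02 - 2 * a10 - 2 * a11 + 4 * a12 + 1 * a20 + 1 * a21 - 2 * a22) / 9) ^ 2 + ((- 2 * a00 + 1 * a01 + 1 * a02 - 2 * a10 + 1 * a11 + 1 * a12 + 4 * a20 - 2 * a21 - 2 * a22) / 9) ^ 2 + ((1 * a00 - 2 * a01 + 1 * a02 + 1 * a10 - 2 * a11 + 1 * a12 - 2 * a20 + 4 * a21 - 2 * a22) / 9) ^ 2 + ((1 * a00 + 1 * a01 - 2 * a02 + 1 * a10 + 1 * a11 - 2 * a12 - 2 * a20 - 2 * a21 + 4 * a22) / 9) ^ 2)) := by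
      linear_combination (norm := ring1) (a00 - m) * e00 + (a01 - m) * e01 + (a02 - m) * e02 + (a10 - m) * e10 + (a11 - m) * e11 + (a12 - m) * e12 + (a20 - m) * e20 + (a21 - m) * e21 + (a22 - m) * e22 - ((1/10) * m ^ 3 - 2 * m - (1/3) * ((a00 - m) + (a01 - m) + (a02 - m) + (a10 - m) + (a11 - m) + (a12 - m) + (a20 - m) + (a21 - m) + (a22 - m))) * hs0
    have hC : 0 ≤ (a00 - m) * (a00 ^ 3 - m ^ 3) + (a01 - m) * (a01 ^ 3 - m ^ 3) + (a02 - m) * (a02 ^ 3 - m ^ 3) + (a10 - m) * (a10 ^ 3 - m ^ 3) + (a11 - m) * (a11 ^ 3 - m ^ 3) + (a12 - m) * (a12 ^ 3 - m ^ 3) + (a20 - m) * (a20 ^ 3 - m ^ 3) + (a21 - m) * (a21 ^ 3 - m ^ 3) + (a22 - m) * (a22 ^ 3 - m ^ 3) :=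
      add_nonneg (add_nonneg (add_nonneg (add_nonneg (add_nonneg (add_nonneg (add_nonneg
        (add_nonneg c00 c01) c02) c10) c11) c12) c20) c21) c22
    have hQ : 0 ≤ ((4 * a00 - 2 * a01 - 2 * a02 - 2 * a10 + 1 * a11 + 1 * a12 - 2 * a20 + 1 * a21 + 1 * a22) / 9) ^ 2 + ((- 2 * a00 + 4 * a01 - 2 * a02 + 1 * a10 - 2 * a11 + 1 * a12 + 1 * a20 - 2 * a21 + 1 * a22) / 9) ^ 2 + ((- 2 * a00 - 2 * a01 + 4 * a02 + 1 * a10 + 1 * a11 - 2 * a12 + 1 * a20 + 1 * a21 - 2 * a22) / 9) ^ 2 + ((- 2 * a00 + 1 * a01 + 1 * a02 + 4 * a10 - 2 * a11 - 2 * a12 - 2 * a20 + 1 * a21 + 1 * a22) / 9) ^ 2 + ((1 * a00 - 2 * a01 + 1 * a02 - 2 * a10 + 4 * a11 - 2 * a12 + 1 * a20 - 2 * a21 + 1 * a22) / 9) ^ 2 + ((1 * a00 + 1 * a01 - 2 * a02 - 2 * a10 - 2 * a11 + 4 * a12 + 1 * a20 + 1 * a21 - 2 * a22) / 9) ^ 2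 + ((- 2 * a00 + 1 * a01 + 1 * a02 - 2 * a10 + 1 * a11 + 1 * a12 + 4 * a20 - 2 * a21 - 2 * a22) / 9) ^ 2 + ((1 * a00 - 2 * a01 + 1 * a02 + 1 * a10 - 2 * a11 + 1 * a12 - 2 * a20 + 4 * a21 - 2 * a22) / 9) ^ 2 + ((1 * a00 + 1 * a01 - 2 * a02 + 1 * a10 + 1 * a11 - 2 * a12 - 2 * a20 - 2 * a21 + 4 * a22) / 9) ^ 2 :=
      add_nonneg (add_nonneg (add_nonneg (add_nonneg (add_nonneg (add_nonneg (add_nonneg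
        (add_nonneg q00 q01) q02) q10) q11) q12) q20) q21) q22
    have hup : (a00 - m) ^ 2 + (a01 - m) ^ 2 + (a02 - m) ^ 2 + (a10 - m) ^ 2 + (a11 - m) ^ 2 + (a12 - m) ^ 2 + (a20 - m) ^ 2 + (a21 - m) ^ 2 + (a22 - m) ^ 2 ≤ 0 := by
      rw [hsum]
      exact neg_nonpos_of_nonneg (add_nonneg
        (mul_nonneg (by norm_num) hC) (mul_nonneg (by norm_num) hQ))
    obtain ⟨z00, z01, z02, z10, z11, z12, z20, z21, z22⟩ := sum9_sq_eq_zero hup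
    have h00 : a00 = m := sub_eq_zero.mp z00
    have h01 : a01 = m := sub_eq_zero.mp z01
    have h02 : a02 = m := sub_eq_zero.mp z02
    have h10 : a10 = m := sub_eq_zero.mp z10
    have h11 : a11 = m := sub_eq_zero.mp z11
    have h12 : a12 = m := sub_eq_zero.mp z12
    have h20 : a20 = m := sub_eq_zero.mp z20
    have h21 : a21 = m := sub_eq_zero.mp z21
    have h22 : a22 = m := sub_eq_zero.mp z22
    have g01 : a01 = a00 := h01.trans h00.symm
    have g02 : a02 = a00 := h02.trans h00.symm
    have g10 : a10 = a00 := h10.trans h00.symm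
    have g11 : a11 = a00 := h11.trans h00.symm
    have g12 : a12 = a00 := h12.trans h00.symm
    have g20 : a20 = a00 := h20.trans h00.symm
    have g21 : a21 = a00 := h21.trans h00.symm
    have g22 : a22 = a00 := h22.trans h00.symm
    have ht : (1/10) * a00 ^ 3 - 2 * a00 = 0 := by
      linear_combination e00 + g10 + g20 + g01 + g02
    have ht2 : a00 * (a00 ^ 2 - 20) = 0 := by linear_combination 10 * ht
    have h20 : Real.sqrt 20 ^ 2 = 20 := Real.sq_sqrt (by norm_num)
    rcases mul_eq_zero.mp ht2 with hz | hs
    · left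
      have hv : a00 = (0:ℝ) := hz
      have k00 : x (0, 0) = _ := hx00.trans hv
      have k01 : x (0, 1) = _ := hx01.trans (g01.trans hv)
      have k02 : x (0, 2) = _ := hx02.trans (g02.trans hv)
      have k10 : x (1, 0) = _ := hx10.trans (g10.trans hv)
      have k11 : x (1, 1) = _ := hx11.trans (g11.trans hv)
      have k12 : x (1, 2) = _ := hx12.trans (g12.trans hv)
      have k20 : x (2, 0) = _ := hx20.trans (g20.trans hv)
      have k21 : x (2, 1) = _ := hx21.trans (g21.trans hv)
      have k22 : x (2, 2) = _ := hx22.trans (g22.trans hv)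
      funext i
      fin_cases i <;> assumption
    · have hfac : (a00 - Real.sqrt 20) * (a00 + Real.sqrt 20) = 0 := by
        linear_combination hs - h20
      rcases mul_eq_zero.mp hfac with hp | hn
      · right; left
        have hv : a00 = Real.sqrt 20 := sub_eq_zero.mp hp
        have k00 : x (0, 0) = _ := hx00.trans hv
        have k01 : x (0, 1) = _ := hx01.trans (g01.trans hv)
        have k02 : x (0, 2) = _ := hx02.trans (g02.trans hv)
        have k10 : x (1, 0) = _ := hx10.trans (g10.trans hv)
        have k11 : x (1, 1) = _ := hx11.trans (g11.trans hv)
        have k12 : x (1, 2) = _ := hx12.trans (g12.trans hv)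
        have k20 : x (2, 0) = _ := hx20.trans (g20.trans hv)
        have k21 : x (2, 1) = _ := hx21.trans (g21.trans hv)
        have k22 : x (2, 2) = _ := hx22.trans (g22.trans hv)
        funext i
        fin_cases i <;> assumption
      · right; right
        have hv : a00 = -Real.sqrt 20 := eq_neg_of_add_eq_zero_left hn
        have k00 : x (0, 0) = _ := hx00.trans hv
        have k01 : x (0, 1) = _ := hx01.trans (g01.trans hv)
        have k02 : x (0, 2) = _ := hx02.trans (g02.trans hv)
        have k10 : x (1, 0) = _ := hx10.trans (g10.trans hv)
        have k11 : x (1, 1) = _ := hx11.trans (g11.trans hv)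
        have k12 : x (1, 2) = _ := hx12.trans (g12.trans hv)
        have k20 : x (2, 0) = _ := hx20.trans (g20.trans hv)
        have k21 : x (2, 1) = _ := hx21.trans (g21.trans hv)
        have k22 : x (2, 2) = _ := hx22.trans (g22.trans hv)
        funext i
        fin_cases i <;> assumption
  · intro h
    have h20 : Real.sqrt 20 ^ 2 = 20 := Real.sq_sqrt (by norm_num)
    rcases h with rfl | rfl | rfl <;> intro i <;>
      simp only [gradV, nbrs, Pi.zero_apply, Multiset.insert_eq_cons, Multiset.map_cons,
        Multiset.map_singleton, Multiset.sum_cons, Multiset.sum_singleton, sub_self]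
    · norm_num
    · linear_combination (Real.sqrt 20 / 10) * h20
    · linear_combination (-(Real.sqrt 20) / 10) * h20
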